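/- Let M be a loopless matroid on a finite nonempty ground set E and let x ∈ ℝ^E. Suppose x^M ∈ ℝ^E is an M-ultrametric with x^M(e) ≤ x(e) for all e ∈ E, such that every M-ultrametric w with w(e) ≤ x(e) for all e satisfies w(e) ≤ x^M(e) for all e. Put δ = (1/2)·max_{e∈E}(x(e) − x^M(e)). Then every M-ultrametric y with ‖x − y‖∞ ≤ δ satisfies y(e) ≤ x^M(e) + δ for all e ∈ E; that is, x^M + δ·1 is coordinatewise maximal among M-ultrametrics l∞-nearest to x. -/

import Mathlib

variable {α : Type*}

/-- The weight of a set `B` with respect to `w`. -/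
noncomputable def bweight (w : α → ℝ) (B : Set α) : ℝ := ∑ᶠ e ∈ B, w e

/-- `B` is a `w`-minimum basis of `M`. -/
def MinBase (M : Matroid α) (w : α → ℝ) (B : Set α) : Prop :=
  M.IsBase B ∧ ∀ B', M.IsBase B' → bweight w B ≤ bweight w B'

/-- `w` is an `M`-ultrametric: every ground element lies in some `w`-minimum basis. -/
def MUltrametric (M : Matroid α) (w : α → ℝ) : Prop :=
  ∀ e ∈ M.E, ∃ B, MinBase M w B ∧ e ∈ B

/-- The `l∞`-distance `‖x - y‖∞ = max_e |x e - y e|`. -/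
noncomputable def linf [Fintype α] [Nonempty α] (x y : α → ℝ) : ℝ :=
  Finset.univ.sup' Finset.univ_nonempty fun e => |x e - y e|

/-- `C(x)`: the set of `M`-ultrametrics that are `l∞`-nearest to `x`. -/
def CSet [Fintype α] [Nonempty α] (M : Matroid α) (x : α → ℝ) : Set (α → ℝ) :=
  {w | MUltrametric M w ∧ ∀ u, MUltrametric M u → linf x w ≤ linf x u}

/-- The tropical convex hull of a nonempty finite set `V ⊆ ℝ^E`. -/
def tconv (V : Finset (α → ℝ)) (hV : V.Nonempty) : Set (α → ℝ) :=
  {w | ∃ lam : (α → ℝ) → ℝ, V.sup' hV lam = 0 ∧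
    ∀ e, w e = V.sup' hV fun v => lam v + v e}

/-- `δ = (1/2)·max_e (x e - xM e)`, where `xM` is the subdominant `M`-ultrametric. -/
noncomputable def subDelta [Fintype α] [Nonempty α] (x xM : α → ℝ) : ℝ :=
  (Finset.univ.sup' Finset.univ_nonempty fun e => x e - xM e) / 2

/-! Shifting a weight by a constant shifts every basis weight by the same amount (all bases have
the same size), so `y - δ·1` is again an `M`-ultrametric. If `‖x - y‖∞ ≤ δ` it lies below `x`,
hence below the subdominant ultrametric `xM`. -/

lemma bweight_sub_const {B : Set α} (hB : B.Finite) (w : α → ℝ) (c : ℝ) :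
    bweight (fun e => w e - c) B = bweight w B - B.ncard * c := by
  lift B to Finset α using hB
  simp only [bweight, finsum_mem_coe_finset, Finset.sum_sub_distrib, Finset.sum_const,
    Set.ncard_coe_finset, nsmul_eq_mul]

lemma MUltrametric.sub_const {M : Matroid α} [M.RankFinite] {w : α → ℝ}
    (hw : MUltrametric M w) (c : ℝ) : MUltrametric M (fun e => w e - c) := by
  intro e he
  obtain ⟨B, ⟨hB, hmin⟩, heB⟩ := hw e he
  refine ⟨B, ⟨hB, fun B' hB' => ?_⟩, heB⟩
  rw [bweight_sub_const hB.finite, bweight_sub_const hB'.finite, hB.ncard_eq_ncard_of_isBase hB']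
  linarith [hmin B' hB']

lemma abs_sub_le_linf [Fintype α] [Nonempty α] (x y : α → ℝ) (e : α) :
    |x e - y e| ≤ linf x y :=
  Finset.le_sup' (fun e => |x e - y e|) (Finset.mem_univ e)

theorem stmt13_general [Fintype α] [Nonempty α] (M : Matroid α) (x xM : α → ℝ)
    (hsub : ∀ w : α → ℝ, MUltrametric M w → (∀ e, w e ≤ x e) → ∀ e, w e ≤ xM e) :
    ∀ y : α → ℝ, MUltrametric M y → linf x y ≤ subDelta x xM →
      ∀ e, y e ≤ xM e + subDelta x xM := by
  intro y hy hxy e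
  have hshift_le : ∀ e, y e - subDelta x xM ≤ x e := fun e => by
    linarith [(abs_le.mp ((abs_sub_le_linf x y e).trans hxy)).1]
  linarith [hsub _ (hy.sub_const (subDelta x xM)) hshift_le e]

/-- With `xM` the subdominant `M`-ultrametric of `x` and `δ = (1/2)max_e(x e - xM e)`,
every `M`-ultrametric `y` with `‖x - y‖∞ ≤ δ` satisfies `y ≤ xM + δ·1` coordinatewise:
`xM + δ·1` is coordinatewise maximal among `M`-ultrametrics `l∞`-nearest to `x`. -/
theorem stmt13 [Fintype α] [Nonempty α] (M : Matroid α) (hE : M.E = Set.univ)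
    (hloop : ∀ e, M.Indep {e}) (x xM : α → ℝ)
    (hxMu : MUltrametric M xM) (hxMle : ∀ e, xM e ≤ x e)
    (hsub : ∀ w : α → ℝ, MUltrametric M w → (∀ e, w e ≤ x e) → ∀ e, w e ≤ xM e) :
    ∀ y : α → ℝ, MUltrametric M y → linf x y ≤ subDelta x xM →
      ∀ e, y e ≤ xM e + subDelta x xM :=
  stmt13_general M x xM hsub
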